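/- For any f ∈ F: μ₂(∂f) = μ₂(f) − 1 if f ∈ B and ∂f ∈ A, and μ₂(∂f) = μ₂(f) otherwise. -/

import Mathlib

open scoped Classical

noncomputable section

/-- `f` is a frequency sequence: `f 0 = 0` and finite support. -/
def IsFreq (f : ℕ → ℕ) : Prop := f 0 = 0 ∧ (Function.support f).Finite

/-- size `|f| = ∑ i·f i`. -/
def fsize (f : ℕ → ℕ) : ℕ := ∑ᶠ n, n * f n

/-- length `ℓ(f) = ∑ f i`. -/
def flen (f : ℕ → ℕ) : ℕ := ∑ᶠ n, f n

/-- the support `S(f)`. -/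
def suppF (f : ℕ → ℕ) : Set ℕ := {i | 1 ≤ i ∧ f i ≠ 0}

/-- `[i,j]` is a spread of `f`: a maximal interval contained in the support. -/
def IsSpread (f : ℕ → ℕ) (i j : ℕ) : Prop :=
  1 ≤ i ∧ i ≤ j ∧ (∀ k, i ≤ k → k ≤ j → f k ≠ 0) ∧ (i = 1 ∨ f (i - 1) = 0) ∧ f (j + 1) = 0

/-- `L(f)`: every other element of each spread, starting from the left end. -/
def Lset (f : ℕ → ℕ) : Set ℕ :=
  {q | ∃ i j, IsSpread f i j ∧ i ≤ q ∧ q ≤ j ∧ (q - i) % 2 = 0}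

/-- `R(f)`: every other element of each spread, starting from the right end. -/
def Rset (f : ℕ → ℕ) : Set ℕ :=
  {q | ∃ i j, IsSpread f i j ∧ i ≤ q ∧ q ≤ j ∧ (j - q) % 2 = 0}

/-- the 2-measure, as the cardinality of `R(f)`. -/
def mu2 (f : ℕ → ℕ) : ℕ := (Rset f).ncard

/-- The Burge demotion operator `∂`. -/
def dB (f : ℕ → ℕ) : ℕ → ℕ := fun n =>
  if n = 0 then 0
  else f n - (if n ∈ Rset f then 1 else 0) + (if n + 1 ∈ Rset f then 1 else 0)

/-- The promotion operator `α`. -/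
def aB (f : ℕ → ℕ) : ℕ → ℕ := fun n =>
  if n = 0 then 0
  else f n - (if n ∈ Lset f then 1 else 0) + (if n - 1 ∈ Lset f then 1 else 0)

/-- the shift `(f₂, f₃, …)`; on partitions this is `P ↦ P - 1`. -/
def tailF (f : ℕ → ℕ) : ℕ → ℕ := fun n => if n = 0 then 0 else f (n + 1)

/-- The operator `β`: `β(f) = (f₁ + 1, α(f₂, f₃, …))`. -/
def bB (f : ℕ → ℕ) : ℕ → ℕ := fun n =>
  if n = 0 then 0 else if n = 1 then f 1 + 1 else aB (tailF f) (n - 1)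

/-- the zero sequence (empty partition). -/
def zeroF : ℕ → ℕ := fun _ => 0

/-- `k` minimal with `∂^[k] f = 0`. -/
def chainK (f : ℕ → ℕ) : ℕ :=
  if h : ∃ m, dB^[m] f = zeroF then Nat.find h else 0

/-- The Burge code of `f`, as a list of letters; `false` = `a`, `true` = `b`.
The `i`-th letter (0-indexed `i`) records whether `∂^[i] f ∈ B`, i.e. `1 ∈ R(∂^[i] f)`. -/
def burgeCode (f : ℕ → ℕ) : List Bool :=
  (List.range (chainK f + 1)).map fun i => if 1 ∈ Rset (dB^[i] f) then true else false

/-- descent set of a word: 1-indexed positions `i` with `ωᵢ = b`, `ω_{i+1} = a`. -/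
def descSet (w : List Bool) : Set ℕ :=
  {i | 1 ≤ i ∧ w[i - 1]? = some true ∧ w[i]? = some false}

/-- the descent set of (the Burge code of) a partition. -/
def DesSet (f : ℕ → ℕ) : Set ℕ := descSet (burgeCode f)

/-- `Des(P)` regarded as a partition, via its frequency sequence. -/
def desFreq (f : ℕ → ℕ) : ℕ → ℕ := fun i => if i ∈ DesSet f then 1 else 0

/-- the 2-measure as the maximal size of a subset of the support without
consecutive pairs. -/
def twoMeasure (f : ℕ → ℕ) : ℕ :=
  sSup {n | ∃ T : Finset ℕ, (↑T : Set ℕ) ⊆ suppF f ∧ (∀ x ∈ T, x + 1 ∉ T) ∧ T.card = n}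

/-- evaluation at `i`: `ν_i(f) = i f_i + (i+1) f_{i+1} + 2 ∑_{j>i+1} f_j`, with `ν₀ = ν₁`. -/
def nuI (f : ℕ → ℕ) (i : ℕ) : ℕ :=
  (max i 1) * f (max i 1) + (max i 1 + 1) * f (max i 1 + 1)
    + 2 * ∑ᶠ j ∈ {j : ℕ | max i 1 + 1 < j}, f j

/-- annihilation at `i`: `ρ_i(f) = (f₁, …, f_{i-1}, f_{i+2}, f_{i+3}, …)`, with `ρ₀ = ρ₁`. -/
def rhoI (f : ℕ → ℕ) (i : ℕ) : ℕ → ℕ := fun n =>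
  if n = 0 then 0 else if n < max i 1 then f n else f (n + 2)

/-- `i ≥ 1` is right admissible in `f`. -/
def RightAdm (f : ℕ → ℕ) (i : ℕ) : Prop :=
  1 ≤ i ∧ 0 < f i ∧ (0 < f (i + 1) ∨ (f (i - 1) = 0 ∧ f (i + 1) = 0))

/-- `i ≥ 0` is left admissible in `f`. -/
def LeftAdm (f : ℕ → ℕ) (i : ℕ) : Prop :=
  0 < f (i + 1) ∧ (0 < f i ∨ (f i = 0 ∧ f (i + 2) = 0))

/-- `i` is a maximal index for `f`: `ν_i(f)` is nonzero and maximal. -/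
def MaxIdx (f : ℕ → ℕ) (i : ℕ) : Prop :=
  nuI f i ≠ 0 ∧ ∀ j, nuI f j ≤ nuI f i

end

/-! Send `q ∈ R(∂f)` to `q + 1` if `q + 1 ∈ R(f)` and to `q` otherwise. Since `∂f q ≠ 0`, this lands
in `R(f)`, and since no two consecutive integers lie in `R(∂f)`, it is injective. Conversely every
`r ≥ 2` in `R(f)` is hit: `∂f (r - 1) ≠ 0` because `∂` moves a unit from `r` to `r - 1`, and a
nonzero position `q` always has `q` or `q + 1` in `R`. The only element of `R(f)` that can be missed
is `1`, and it is missed exactly when `1 ∉ R(∂f)`. -/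

lemma Rset_subset_suppF (g : ℕ → ℕ) : Rset g ⊆ suppF g :=
  fun _ ⟨_, _, ⟨hi, _, hnz, _⟩, hiq, hqj, _⟩ => ⟨hi.trans hiq, hnz _ hiq hqj⟩

lemma succ_notMem_Rset {g : ℕ → ℕ} {q : ℕ} (hq : q ∈ Rset g) : q + 1 ∉ Rset g := by
  obtain ⟨i, j, ⟨-, -, hnz, -, hj⟩, hiq, hqj, hpar⟩ := hq
  rintro ⟨i', j', ⟨-, -, hnz', -, hj'⟩, hiq', hqj', hpar'⟩
  rcases lt_trichotomy j j' with h | rfl | h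
  · exact hnz' (j + 1) (by omega) (by omega) hj
  · omega
  · exact hnz (j' + 1) (by omega) (by omega) hj'

lemma exists_isSpread {g : ℕ → ℕ} (hg : (Function.support g).Finite) {q : ℕ}
    (hq : q ∈ suppF g) : ∃ i j, IsSpread g i j ∧ i ≤ q ∧ q ≤ j := by
  obtain ⟨hq1, hq0⟩ := hq
  have hleft : ∃ i, 1 ≤ i ∧ i ≤ q ∧ ∀ k, i ≤ k → k ≤ q → g k ≠ 0 :=
    ⟨q, hq1, le_rfl, fun k h₁ h₂ => le_antisymm h₂ h₁ ▸ hq0⟩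
  have hright : ∃ j, q ≤ j ∧ g (j + 1) = 0 := by
    obtain ⟨B, hB⟩ := hg.bddAbove
    refine ⟨max q B, le_max_left _ _, Function.notMem_support.mp fun h => ?_⟩
    have := hB h
    omega
  obtain ⟨hi1, hiq, hnz⟩ := Nat.find_spec hleft
  obtain ⟨hqj, hj⟩ := Nat.find_spec hright
  refine ⟨Nat.find hleft, Nat.find hright, ⟨hi1, hiq.trans hqj, fun k hik hkj => ?_, ?_, hj⟩,
    hiq, hqj⟩
  · by_cases hkq : k ≤ q
    · exact hnz k hik hkq
    · have h := Nat.find_min hright (show k - 1 < Nat.find hright by omega)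
      rw [not_and, Nat.sub_add_cancel (by omega : 1 ≤ k)] at h
      exact h (by omega)
  · by_contra! h
    refine Nat.find_min hleft (show Nat.find hleft - 1 < Nat.find hleft by omega)
      ⟨by omega, by omega, fun k hik hkq => ?_⟩
    rcases eq_or_lt_of_le hik with rfl | _
    · exact h.2
    · exact hnz k (by omega) hkq

lemma mem_Rset_or_succ_mem_Rset {g : ℕ → ℕ} (hg : (Function.support g).Finite) {q : ℕ}
    (hq : q ∈ suppF g) : q ∈ Rset g ∨ q + 1 ∈ Rset g := by
  obtain ⟨i, j, hs, hiq, hqj⟩ := exists_isSpread hg hq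
  rcases Nat.even_or_odd (j - q) with h | h
  · exact Or.inl ⟨i, j, hs, hiq, hqj, Nat.even_iff.mp h⟩
  · refine Or.inr ⟨i, j, hs, by omega, ?_, ?_⟩ <;>
    · obtain ⟨m, hm⟩ := h
      omega

lemma support_dB_finite {f : ℕ → ℕ} (hf : (Function.support f).Finite) :
    (Function.support (dB f)).Finite := by
  refine (hf.union (hf.preimage (Set.injOn_of_injective (add_left_injective 1)))).subset ?_
  intro n hn
  by_contra h
  simp only [Set.mem_union, Function.mem_support, Set.mem_preimage, not_or, not_not] at h
  have hn1 : n + 1 ∉ Rset f := fun hR => (Rset_subset_suppF f hR).2 h.2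
  apply hn
  unfold dB
  split_ifs <;> simp_all

lemma dB_ne_zero_of_succ_mem_Rset {f : ℕ → ℕ} {q : ℕ} (hq : 1 ≤ q) (h : q + 1 ∈ Rset f) :
    dB f q ≠ 0 := by
  simp [dB, h, Nat.one_le_iff_ne_zero.mp hq]

lemma ne_zero_of_dB_ne_zero {f : ℕ → ℕ} {q : ℕ} (h : dB f q ≠ 0) (hs : q + 1 ∉ Rset f) :
    f q ≠ 0 := by
  unfold dB at h
  split_ifs at h <;> omega

noncomputable def rsetLift (f : ℕ → ℕ) (q : ℕ) : ℕ := if q + 1 ∈ Rset f then q + 1 else q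

lemma rsetLift_of_notMem {f : ℕ → ℕ} {q : ℕ} (hq : q + 1 ∉ Rset f) : rsetLift f q = q :=
  if_neg hq

lemma rsetLift_pred {f : ℕ → ℕ} {r : ℕ} (hr : r ∈ Rset f) (h2 : 2 ≤ r) :
    rsetLift f (r - 1) = r := by
  rw [rsetLift, Nat.sub_add_cancel (by omega : 1 ≤ r), if_pos hr]

lemma rsetLift_mem_Rset {f : ℕ → ℕ} (hf : (Function.support f).Finite) {q : ℕ}
    (hq : q ∈ Rset (dB f)) : rsetLift f q ∈ Rset f := by
  obtain ⟨hq1, hq0⟩ := Rset_subset_suppF _ hq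
  unfold rsetLift
  split_ifs with hs
  · exact hs
  · exact (mem_Rset_or_succ_mem_Rset hf ⟨hq1, ne_zero_of_dB_ne_zero hq0 hs⟩).resolve_right hs

lemma injOn_rsetLift (f : ℕ → ℕ) : Set.InjOn (rsetLift f) (Rset (dB f)) := by
  intro a ha b hb hab
  unfold rsetLift at hab
  split_ifs at hab
  · omega
  · exact absurd (hab ▸ hb) (succ_notMem_Rset ha)
  · exact absurd (hab ▸ ha) (succ_notMem_Rset hb)
  · exact hab

lemma image_rsetLift {f : ℕ → ℕ} (hf : (Function.support f).Finite) :
    rsetLift f '' Rset (dB f) = Rset f \ ({1} \ Rset (dB f)) := by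
  ext r
  simp only [Set.mem_image, Set.mem_sdiff, Set.mem_singleton_iff, not_and, not_not]
  constructor
  · rintro ⟨q, hq, rfl⟩
    refine ⟨rsetLift_mem_Rset hf hq, fun h1 => ?_⟩
    have hq1 : q = 1 := by
      have := (Rset_subset_suppF _ hq).1
      unfold rsetLift at h1
      split_ifs at h1 <;> omega
    rwa [h1, ← hq1]
  · rintro ⟨hr, h1⟩
    have hr1 := (Rset_subset_suppF _ hr).1
    rcases eq_or_lt_of_le hr1 with rfl | h2
    · exact ⟨1, h1 rfl, rsetLift_of_notMem (succ_notMem_Rset hr)⟩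
    have hpred : r - 1 ∈ suppF (dB f) := ⟨by omega,
      dB_ne_zero_of_succ_mem_Rset (by omega) (by rwa [Nat.sub_add_cancel (by omega : 1 ≤ r)])⟩
    rcases mem_Rset_or_succ_mem_Rset (support_dB_finite hf) hpred with h | h
    · exact ⟨r - 1, h, rsetLift_pred hr h2⟩
    · rw [Nat.sub_add_cancel (by omega : 1 ≤ r)] at h
      exact ⟨r, h, rsetLift_of_notMem (succ_notMem_Rset hr)⟩

/-- `μ₂(∂f) = μ₂(f) - 1` if `f ∈ B` and `∂f ∈ A`, and
`μ₂(∂f) = μ₂(f)` otherwise. -/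
theorem stmt7 (f : ℕ → ℕ) (hf : IsFreq f) :
    mu2 (dB f) = if 1 ∈ Rset f ∧ 1 ∉ Rset (dB f) then mu2 f - 1 else mu2 f := by
  rw [mu2, mu2, ← (injOn_rsetLift f).ncard_image, image_rsetLift hf.2]
  split_ifs with h
  · rw [sdiff_eq_left.mpr (Set.disjoint_singleton_left.mpr h.2),
      Set.ncard_sdiff_singleton_of_mem h.1]
  · rw [sdiff_eq_left.mpr (Set.disjoint_left.mpr ?_)]
    rintro _ hR ⟨rfl, h1⟩
    exact h ⟨hR, h1⟩
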